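/- If W Q⁻¹ = c·I for some constant c > 0 and additionally all singular values of Q^{-1/2} U Q^{-1/2} are equal to ‖Q^{-1/2} U Q^{-1/2}‖_∞, then T[W] = R. -/

import Mathlib

open Matrix

open scoped ComplexOrder in
/-- The positive semidefinite square root of a positive semidefinite matrix, as defined in the
older Mathlib (removed since). -/
noncomputable def Matrix.PosSemidef.sqrt {n 𝕜 : Type*} [Fintype n] [DecidableEq n] [RCLike 𝕜]
    {A : Matrix n n 𝕜} (hA : A.PosSemidef) : Matrix n n 𝕜 :=
  hA.1.eigenvectorUnitary.1 * diagonal ((↑) ∘ Real.sqrt ∘ hA.1.eigenvalues) *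
  (star hA.1.eigenvectorUnitary : Matrix n n 𝕜)

open scoped ComplexOrder in
theorem Matrix.PosSemidef.posSemidef_sqrt {n 𝕜 : Type*} [Fintype n] [DecidableEq n] [RCLike 𝕜]
    {A : Matrix n n 𝕜} (hA : A.PosSemidef) : hA.sqrt.PosSemidef := by
  unfold Matrix.PosSemidef.sqrt
  have hd : (diagonal ((↑) ∘ Real.sqrt ∘ hA.1.eigenvalues : n → 𝕜)).PosSemidef := by
    rw [posSemidef_diagonal_iff]
    intro i
    simp only [Function.comp_apply, RCLike.ofReal_nonneg]
    exact Real.sqrt_nonneg _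
  have := hd.mul_mul_conjTranspose_same (hA.1.eigenvectorUnitary.1)
  simpa [Matrix.star_eq_conjTranspose] using this

noncomputable def traceNorm {n : ℕ} (A : Matrix (Fin n) (Fin n) ℝ) : ℝ :=
  (Matrix.posSemidef_conjTranspose_mul_self A).sqrt.trace

noncomputable def singVals {n : ℕ} (A : Matrix (Fin n) (Fin n) ℝ) : Fin n → ℝ :=
  (Matrix.posSemidef_conjTranspose_mul_self A).posSemidef_sqrt.1.eigenvalues

noncomputable def opNorm {n : ℕ} (A : Matrix (Fin n) (Fin n) ℝ) : ℝ :=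
  ⨆ i, singVals A i

/-- the positive semidefinite square root, extended by `0` off psd matrices -/
noncomputable def mySqrt {n : ℕ} (A : Matrix (Fin n) (Fin n) ℝ) : Matrix (Fin n) (Fin n) ℝ :=
  open Classical in
  if h : A.PosSemidef then h.sqrt else 0

/-- the weight-dependent incompatibility measure `T[W]` -/
noncomputable def Tmeas {n : ℕ} (W Q U : Matrix (Fin n) (Fin n) ℝ) : ℝ :=
  traceNorm (mySqrt W * Q⁻¹ * U * Q⁻¹ * mySqrt W) / (W * Q⁻¹).trace

/-- the quantumness measure `R` -/
noncomputable def Rmeas {n : ℕ} (Q U : Matrix (Fin n) (Fin n) ℝ) : ℝ :=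
  opNorm (mySqrt Q⁻¹ * U * mySqrt Q⁻¹)


/-!
`W Q⁻¹ = c • 1` forces `W = c • Q`, so `√W = √c • √Q`, and since `√Q Q⁻¹ = Q⁻¹ √Q = Q^{-1/2}`,
`√W Q⁻¹ U Q⁻¹ √W = c • A` with `A = Q^{-1/2} U Q^{-1/2}`. The trace norm of `c • A` is `c` times
the sum of the `n` singular values of `A`, each equal to `R = ‖A‖_∞`, while `Tr[W Q⁻¹] = c n`.
-/

open scoped MatrixOrder

section

variable {m : Type*} [Fintype m] [DecidableEq m]

lemma Matrix.PosSemidef.sqrt_eq_cfcSqrt {A : Matrix m m ℝ} (hA : A.PosSemidef) :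
    hA.sqrt = CFC.sqrt A := by
  rw [CFC.sqrt_eq_real_sqrt A hA.nonneg, cfcₙ_eq_cfc (hf0 := Real.sqrt_zero), hA.1.cfc_eq,
    IsHermitian.cfc, Unitary.conjStarAlgAut_apply]
  rfl

lemma Matrix.cfcSqrt_inv (A : Matrix m m ℝ) : CFC.sqrt A⁻¹ = (CFC.sqrt A)⁻¹ := by
  rw [nonsing_inv_eq_ringInverse, nonsing_inv_eq_ringInverse, CFC.sqrt_ringInverse]

lemma Matrix.cfcSqrt_smul {A : Matrix m m ℝ} (hA : 0 ≤ A) {c : ℝ} (hc : 0 ≤ c) :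
    CFC.sqrt (c • A) = √c • CFC.sqrt A := by
  refine CFC.sqrt_unique ?_ (smul_nonneg (Real.sqrt_nonneg c) (CFC.sqrt_nonneg A))
  rw [smul_mul_smul_comm, Real.mul_self_sqrt hc, CFC.sqrt_mul_sqrt_self A hA]

lemma Matrix.PosDef.isUnit_det_cfcSqrt {Q : Matrix m m ℝ} (hQ : Q.PosDef) :
    IsUnit (CFC.sqrt Q).det :=
  (isUnit_iff_isUnit_det _).1 <| (CFC.isUnit_sqrt_iff Q hQ.posSemidef.nonneg).2 hQ.isUnit

lemma Matrix.cfcSqrt_mul_inv {Q : Matrix m m ℝ} (hQ : Q.PosDef) :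
    CFC.sqrt Q * Q⁻¹ = CFC.sqrt Q⁻¹ := by
  nth_rw 2 [← CFC.sqrt_mul_sqrt_self Q hQ.posSemidef.nonneg]
  rw [Matrix.mul_inv_rev, ← Matrix.mul_assoc, Matrix.mul_nonsing_inv _ hQ.isUnit_det_cfcSqrt,
    Matrix.one_mul, cfcSqrt_inv]

lemma Matrix.inv_mul_cfcSqrt {Q : Matrix m m ℝ} (hQ : Q.PosDef) :
    Q⁻¹ * CFC.sqrt Q = CFC.sqrt Q⁻¹ := by
  nth_rw 1 [← CFC.sqrt_mul_sqrt_self Q hQ.posSemidef.nonneg]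
  rw [Matrix.mul_inv_rev, Matrix.mul_assoc, Matrix.nonsing_inv_mul _ hQ.isUnit_det_cfcSqrt,
    Matrix.mul_one, cfcSqrt_inv]

lemma Matrix.eq_smul_of_mul_inv_eq_smul_one {R : Type*} [CommRing R] {W Q : Matrix m m R}
    (hQ : IsUnit Q.det) {c : R} (h : W * Q⁻¹ = c • 1) : W = c • Q := by
  rw [← nonsing_inv_mul_cancel_right (A := Q) W hQ, h, Matrix.smul_mul, Matrix.one_mul]

end

variable {n : ℕ}

lemma mySqrt_eq_cfcSqrt (A : Matrix (Fin n) (Fin n) ℝ) : mySqrt A = CFC.sqrt A := by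
  by_cases hA : A.PosSemidef
  · rw [mySqrt, dif_pos hA, hA.sqrt_eq_cfcSqrt]
  · rw [mySqrt, dif_neg hA, CFC.sqrt_of_not_nonneg (by rwa [nonneg_iff_posSemidef])]

lemma mySqrt_smul_sandwich_inv {Q : Matrix (Fin n) (Fin n) ℝ} (hQ : Q.PosDef) {c : ℝ}
    (hc : 0 ≤ c) (U : Matrix (Fin n) (Fin n) ℝ) :
    mySqrt (c • Q) * Q⁻¹ * U * Q⁻¹ * mySqrt (c • Q) = c • (mySqrt Q⁻¹ * U * mySqrt Q⁻¹) := by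
  simp only [mySqrt_eq_cfcSqrt, cfcSqrt_smul hQ.posSemidef.nonneg hc, Matrix.smul_mul,
    Matrix.mul_smul, smul_smul, Real.mul_self_sqrt hc, cfcSqrt_mul_inv hQ, Matrix.mul_assoc,
    inv_mul_cfcSqrt hQ]

lemma traceNorm_eq_trace_cfcSqrt (A : Matrix (Fin n) (Fin n) ℝ) :
    traceNorm A = (CFC.sqrt (Aᴴ * A)).trace := by
  rw [traceNorm, PosSemidef.sqrt_eq_cfcSqrt]

lemma traceNorm_eq_sum_singVals (A : Matrix (Fin n) (Fin n) ℝ) :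
    traceNorm A = ∑ i, singVals A i := by
  rw [traceNorm, IsHermitian.trace_eq_sum_eigenvalues (PosSemidef.posSemidef_sqrt _).1]
  rfl

lemma traceNorm_smul (A : Matrix (Fin n) (Fin n) ℝ) {c : ℝ} (hc : 0 ≤ c) :
    traceNorm (c • A) = c * traceNorm A := by
  have h : (c • A)ᴴ * (c • A) = (c * c) • (Aᴴ * A) := by
    rw [conjTranspose_smul, star_trivial, smul_mul_smul_comm]
  rw [traceNorm_eq_trace_cfcSqrt, traceNorm_eq_trace_cfcSqrt, h,
    cfcSqrt_smul (posSemidef_conjTranspose_mul_self A).nonneg (mul_self_nonneg c),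
    Real.sqrt_mul_self hc, trace_smul, smul_eq_mul]

lemma traceNorm_div_card_eq_opNorm {A : Matrix (Fin n) (Fin n) ℝ}
    (h : ∀ i, singVals A i = opNorm A) : traceNorm A / n = opNorm A := by
  rcases Nat.eq_zero_or_pos n with rfl | hn
  · -- junk values: `traceNorm A / 0 = 0` and the empty supremum is `0`
    simp [opNorm]
  · rw [traceNorm_eq_sum_singVals, Finset.sum_congr rfl fun i _ => h i, Finset.sum_const,
      Finset.card_univ, Fintype.card_fin, nsmul_eq_mul, mul_div_cancel_left₀ _ (by positivity)]

theorem Tmeas_eq_Rmeas_of_prop_id_general {n : ℕ} (W Q U : Matrix (Fin n) (Fin n) ℝ)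
    (hQ : Q.PosDef)
    (c : ℝ) (hc : 0 < c) (hWQ : W * Q⁻¹ = c • (1 : Matrix (Fin n) (Fin n) ℝ))
    (hsv : ∀ i, singVals (mySqrt Q⁻¹ * U * mySqrt Q⁻¹) i =
        opNorm (mySqrt Q⁻¹ * U * mySqrt Q⁻¹)) :
    Tmeas W Q U = Rmeas Q U := by
  have hW : W = c • Q :=
    eq_smul_of_mul_inv_eq_smul_one ((isUnit_iff_isUnit_det Q).1 hQ.isUnit) hWQ
  rw [Tmeas, Rmeas, hWQ, hW, mySqrt_smul_sandwich_inv hQ hc.le, traceNorm_smul _ hc.le,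
    trace_smul, trace_one, Fintype.card_fin, smul_eq_mul, mul_div_mul_left _ _ hc.ne',
    traceNorm_div_card_eq_opNorm hsv]

/-- If W Q⁻¹ = c·I with c > 0 and all singular values of Q^{-1/2} U Q^{-1/2} equal its
operator norm, then T[W] = R. -/
theorem Tmeas_eq_Rmeas_of_prop_id {n : ℕ} (W Q U : Matrix (Fin n) (Fin n) ℝ)
    (hW : W.PosDef) (hQ : Q.PosDef) (hU : Uᵀ = -U)
    (c : ℝ) (hc : 0 < c) (hWQ : W * Q⁻¹ = c • (1 : Matrix (Fin n) (Fin n) ℝ))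
    (hsv : ∀ i, singVals (mySqrt Q⁻¹ * U * mySqrt Q⁻¹) i =
        opNorm (mySqrt Q⁻¹ * U * mySqrt Q⁻¹)) :
    Tmeas W Q U = Rmeas Q U :=
  Tmeas_eq_Rmeas_of_prop_id_general W Q U hQ c hc hWQ hsv
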